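/- For every n ≥ 2, the coefficient of the monomial x_1 (exponent 1 on x_1 and 0 on all other variables) in ψ_n equals n!, and the coefficient of the monomial x_n (exponent 1 on x_n and 0 on all other variables) in ψ_n equals (-1)^{n-1}·(n-1)!. -/

import Mathlib

open scoped BigOperators

/-- Partial Bell polynomial `B_{n,k}`; the variable `X i` represents `x_{i+1}`. -/
noncomputable def bellPartial (n k : ℕ) : MvPolynomial ℕ ℤ :=
  ∑ j : Fin (n - k + 1) → Fin (n + 1),
    if (∑ ν : Fin (n - k + 1), ((ν : ℕ) + 1) * (j ν : ℕ)) = n ∧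
        (∑ ν : Fin (n - k + 1), (j ν : ℕ)) = k then
      (MvPolynomial.C ((n.factorial /
          ∏ ν : Fin (n - k + 1),
            ((j ν : ℕ).factorial * ((ν : ℕ) + 1).factorial ^ (j ν : ℕ)) : ℕ) : ℤ)) *
        ∏ ν : Fin (n - k + 1), MvPolynomial.X (ν : ℕ) ^ (j ν : ℕ)
    else 0

/-- Complete Bell polynomial `B_n = ∑_{k=1}^n B_{n,k}`. -/
noncomputable def bellComplete (n : ℕ) : MvPolynomial ℕ ℤ :=
  ∑ k ∈ Finset.Icc 1 n, bellPartial n k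

/-- `σ̂*_k(x_1,…,x_k) = (-1)^k B_k(-0!·x_1, -1!·x_2, …, -(k-1)!·x_k)`
(recall `X i` represents `x_{i+1}`, so `x_{i+1} ↦ -i!·x_{i+1}`). -/
noncomputable def sigmaStar (k : ℕ) : MvPolynomial ℕ ℤ :=
  (-1) ^ k * MvPolynomial.aeval
    (fun i : ℕ => MvPolynomial.C (-(i.factorial : ℤ)) * MvPolynomial.X i)
    (bellComplete k)

/-- Signed Stirling numbers of the first kind:
`x(x-1)⋯(x-n+1) = ∑_{k=0}^n s(n,k) x^k`. -/
noncomputable def stirlingFirst (n k : ℕ) : ℤ :=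
  (∏ i ∈ Finset.range n, (Polynomial.X - Polynomial.C (i : ℤ))).coeff k

/-- `Ψ_n` built from a family `f` playing the role of `ψ`:
`Ψ_n = ∑_{ν=2}^{n} ∑_{k=0}^{min(ν,n-ν)} (-1)^{ν+1} s(ν+1,k+1) (n)_k B_{n-k,ν}(f_1,…,f_{n-k-ν+1})`. -/
noncomputable def PsiOf (f : ℕ → MvPolynomial ℕ ℤ) (n : ℕ) : MvPolynomial ℕ ℤ :=
  ∑ ν ∈ Finset.Icc 2 n, ∑ k ∈ Finset.range (min ν (n - ν) + 1),
    MvPolynomial.C ((-1) ^ (ν + 1) * stirlingFirst (ν + 1) (k + 1) *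
        ((n.factorial / (n - k).factorial : ℕ) : ℤ)) *
      MvPolynomial.aeval (fun i : ℕ => f (i + 1)) (bellPartial (n - k) ν)

/-- The polynomials `ψ_n`, with `ψ_0 = 0` and `ψ_n = n·ψ_{n-1} + σ̂*_n + Ψ_n` for `n ≥ 1`. -/
noncomputable def psi : ℕ → MvPolynomial ℕ ℤ := fun n =>
  Nat.strongRecOn n fun n ih =>
    if h : n = 0 then 0
    else
      (n : ℤ) • ih (n - 1) (by omega) + sigmaStar n +
        PsiOf (fun m => if hm : m < n then ih m hm else 0) n

/-- The polynomials `Ψ_n`. -/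
noncomputable def Psi (n : ℕ) : MvPolynomial ℕ ℤ := PsiOf psi n

lemma aux_sum_eq_zero {d : ℕ →₀ ℕ} (h : (d.sum fun _ e => e) = 0) : d = 0 := by
  ext x
  by_cases hx : x ∈ d.support
  · have := Finset.sum_eq_zero_iff.mp h x hx
    simpa using this
  · simpa using Finsupp.notMem_support_iff.mp hx

lemma aux_mul_low {p q : MvPolynomial ℕ ℤ} {m m' : ℕ}
    (hp : ∀ d : ℕ →₀ ℕ, (d.sum fun _ e => e) < m → MvPolynomial.coeff d p = 0)
    (hq : ∀ d : ℕ →₀ ℕ, (d.sum fun _ e => e) < m' → MvPolynomial.coeff d q = 0) :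
    ∀ d : ℕ →₀ ℕ, (d.sum fun _ e => e) < m + m' → MvPolynomial.coeff d (p * q) = 0 := by
  intro d hd
  rw [MvPolynomial.coeff_mul]
  apply Finset.sum_eq_zero
  intro x hx
  have hxy : x.1 + x.2 = d := Finset.HasAntidiagonal.mem_antidiagonal.mp hx
  have hsum : (x.1.sum fun _ e => e) + (x.2.sum fun _ e => e) = d.sum fun _ e => e := by
    rw [← hxy, Finsupp.sum_add_index] <;> simp
  rcases lt_or_ge (x.1.sum fun _ e => e) m with h1 | h1
  · rw [hp _ h1, zero_mul]
  · rw [hq _ (by omega), mul_zero]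

lemma aux_pow_low {g : MvPolynomial ℕ ℤ} (hg : MvPolynomial.constantCoeff g = 0) (k : ℕ) :
    ∀ d : ℕ →₀ ℕ, (d.sum fun _ e => e) < k → MvPolynomial.coeff d (g ^ k) = 0 := by
  induction k with
  | zero => intro d hd; omega
  | succ k ih =>
    rw [pow_succ]
    have h1 : ∀ d : ℕ →₀ ℕ, (d.sum fun _ e => e) < 1 → MvPolynomial.coeff d g = 0 := by
      intro d hd
      have : d = 0 := aux_sum_eq_zero (by omega)
      rw [this]; exact hg
    intro d hd
    exact aux_mul_low ih h1 d (by omega)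

lemma aux_prod_low {ι : Type*} (s : Finset ι) (g : ι → MvPolynomial ℕ ℤ) (j : ι → ℕ)
    (hg : ∀ ν ∈ s, MvPolynomial.constantCoeff (g ν) = 0) :
    ∀ d : ℕ →₀ ℕ, (d.sum fun _ e => e) < ∑ ν ∈ s, j ν →
      MvPolynomial.coeff d (∏ ν ∈ s, g ν ^ j ν) = 0 := by
  classical
  induction s using Finset.induction with
  | empty => intro d hd; simp at hd
  | @insert a s ha ih =>
    rw [Finset.prod_insert ha, Finset.sum_insert ha]
    exact aux_mul_low (aux_pow_low (hg a (Finset.mem_insert_self a s)) (j a))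
      (ih fun ν hν => hg ν (Finset.mem_insert_of_mem hν))

lemma aux_Dj_apply (m : ℕ) (j : Fin m → ℕ) (x : ℕ) :
    (∑ ν : Fin m, Finsupp.single (ν : ℕ) (j ν)) x
      = if h : x < m then j ⟨x, h⟩ else 0 := by
  rw [Finsupp.finset_sum_apply]
  split_ifs with h
  · rw [Finset.sum_eq_single (⟨x, h⟩ : Fin m)]
    · simp
    · intro b _ hb
      rw [Finsupp.single_apply, if_neg]
      intro hc; exact hb (Fin.ext hc)
    · simp
  · apply Finset.sum_eq_zero
    intro b _
    rw [Finsupp.single_apply, if_neg]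
    intro hc; omega

lemma aux_prod_X_pow (m : ℕ) (j : Fin m → ℕ) :
    (∏ ν : Fin m, (MvPolynomial.X (ν : ℕ) : MvPolynomial ℕ ℤ) ^ j ν)
      = MvPolynomial.monomial (∑ ν : Fin m, Finsupp.single (ν : ℕ) (j ν)) 1 := by
  rw [MvPolynomial.monomial_sum_one]
  exact Finset.prod_congr rfl fun ν _ => MvPolynomial.X_pow_eq_monomial

lemma aux_monomial_prod {ι : Type*} (s : Finset ι) (f : ι → (ℕ →₀ ℕ)) (c : ι → ℤ) :
    (∏ x ∈ s, (MvPolynomial.monomial (f x) (c x) : MvPolynomial ℕ ℤ))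
      = MvPolynomial.monomial (∑ x ∈ s, f x) (∏ x ∈ s, c x) := by
  classical
  induction s using Finset.induction with
  | empty => simp
  | @insert a s ha ih =>
    rw [Finset.prod_insert ha, Finset.sum_insert ha, Finset.prod_insert ha, ih,
      MvPolynomial.monomial_mul]

lemma aux_prod_CX_pow (m : ℕ) (a : ℕ → ℤ) (j : Fin m → ℕ) :
    (∏ ν : Fin m, (MvPolynomial.C (a (ν : ℕ)) * MvPolynomial.X (ν : ℕ)
        : MvPolynomial ℕ ℤ) ^ j ν)
      = MvPolynomial.monomial (∑ ν : Fin m, Finsupp.single (ν : ℕ) (j ν))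
          (∏ ν : Fin m, a (ν : ℕ) ^ j ν) := by
  rw [← aux_monomial_prod]
  refine Finset.prod_congr rfl fun ν _ => ?_
  rw [mul_pow, ← MvPolynomial.C_pow, MvPolynomial.X_pow_eq_monomial,
    MvPolynomial.C_mul_monomial, mul_one]

/-- the scaled-variables coefficient computation -/
lemma aux_coeff_bellPartial_scaled (a : ℕ → ℤ) (n k i : ℕ) (hk : 1 ≤ k) :
    MvPolynomial.coeff (Finsupp.single i 1)
      (MvPolynomial.aeval (fun ν : ℕ => MvPolynomial.C (a ν) * MvPolynomial.X ν)
        (bellPartial n k))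
      = if k = 1 ∧ i + 1 = n then a i else 0 := by
  classical
  set m := n - k + 1 with hm
  rw [bellPartial, map_sum, MvPolynomial.coeff_sum]
  have hterm : ∀ j : Fin m → Fin (n + 1),
      MvPolynomial.coeff (Finsupp.single i 1)
        (MvPolynomial.aeval (fun ν : ℕ => MvPolynomial.C (a ν) * MvPolynomial.X ν)
          (if (∑ ν : Fin m, ((ν : ℕ) + 1) * (j ν : ℕ)) = n ∧
              (∑ ν : Fin m, (j ν : ℕ)) = k then
            (MvPolynomial.C ((n.factorial /
                ∏ ν : Fin m,
                  ((j ν : ℕ).factorial * ((ν : ℕ) + 1).factorial ^ (j ν : ℕ)) : ℕ) : ℤ)) *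
              ∏ ν : Fin m, MvPolynomial.X (ν : ℕ) ^ (j ν : ℕ)
          else 0))
      = if ((∑ ν : Fin m, ((ν : ℕ) + 1) * (j ν : ℕ)) = n ∧
              (∑ ν : Fin m, (j ν : ℕ)) = k) ∧
            (∑ ν : Fin m, Finsupp.single (ν : ℕ) ((j ν : ℕ))) = Finsupp.single i 1 then
          ((n.factorial /
              ∏ ν : Fin m,
                ((j ν : ℕ).factorial * ((ν : ℕ) + 1).factorial ^ (j ν : ℕ)) : ℕ) : ℤ) *
            ∏ ν : Fin m, a (ν : ℕ) ^ (j ν : ℕ)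
        else 0 := by
    intro j
    rw [apply_ite (MvPolynomial.aeval
      (fun ν : ℕ => MvPolynomial.C (a ν) * MvPolynomial.X ν)), map_zero]
    rw [map_mul, MvPolynomial.aeval_C, map_prod]
    simp only [map_pow, MvPolynomial.aeval_X]
    rw [aux_prod_CX_pow, MvPolynomial.algebraMap_eq, MvPolynomial.C_mul_monomial]
    rw [apply_ite (MvPolynomial.coeff (Finsupp.single i 1)), MvPolynomial.coeff_zero,
      MvPolynomial.coeff_monomial]
    simp only [← ite_and]
  rw [Finset.sum_congr rfl fun j _ => hterm j]
  clear hterm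
  -- key equivalence for a tuple satisfying the conditions
  have key : ∀ j : Fin m → Fin (n + 1),
      (((∑ ν : Fin m, ((ν : ℕ) + 1) * (j ν : ℕ)) = n ∧ (∑ ν : Fin m, (j ν : ℕ)) = k) ∧
        (∑ ν : Fin m, Finsupp.single (ν : ℕ) ((j ν : ℕ))) = Finsupp.single i 1) →
      k = 1 ∧ i + 1 = n ∧ ∀ ν : Fin m, (j ν : ℕ) = if (ν : ℕ) = i then 1 else 0 := by
    intro j ⟨⟨h1, h2⟩, h3⟩
    have him : i < m := by
      by_contra hc
      have := aux_Dj_apply m (fun ν => (j ν : ℕ)) i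
      rw [h3] at this
      simp [dif_neg hc] at this
    have hj : ∀ ν : Fin m, (j ν : ℕ) = if (ν : ℕ) = i then 1 else 0 := by
      intro ν
      have := aux_Dj_apply m (fun ν => (j ν : ℕ)) (ν : ℕ)
      rw [h3, dif_pos ν.isLt] at this
      simp only [Fin.eta] at this
      rw [← this, Finsupp.single_apply]
      by_cases hc : (ν : ℕ) = i
      · rw [if_pos hc, if_pos hc.symm]
      · rw [if_neg hc, if_neg (fun h => hc h.symm)]
    have hk1 : (∑ ν : Fin m, (j ν : ℕ)) = 1 := by
      rw [Finset.sum_congr rfl fun ν _ => hj ν]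
      have : ∀ ν : Fin m, ((ν : ℕ) = i) = (ν = ⟨i, him⟩) := by
        intro ν; simp [Fin.ext_iff]
      simp only [this]
      rw [Finset.sum_ite_eq' Finset.univ (⟨i, him⟩ : Fin m) (fun _ => 1)]
      simp
    have hn1 : (∑ ν : Fin m, ((ν : ℕ) + 1) * (j ν : ℕ)) = i + 1 := by
      rw [Finset.sum_congr rfl fun ν _ => by rw [hj ν]]
      have : ∀ ν : Fin m, (((ν : ℕ) + 1) * if (ν : ℕ) = i then 1 else 0)
          = if ν = ⟨i, him⟩ then i + 1 else 0 := by
        intro ν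
        by_cases hc : (ν : ℕ) = i
        · simp [hc, Fin.ext_iff]
        · simp [hc, Fin.ext_iff]
      rw [Finset.sum_congr rfl fun ν _ => this ν]
      rw [Finset.sum_ite_eq' Finset.univ (⟨i, him⟩ : Fin m) (fun _ => i + 1)]
      simp
    exact ⟨by omega, by omega, hj⟩
  by_cases hmain : k = 1 ∧ i + 1 = n
  · rw [if_pos hmain]
    obtain ⟨hk1, hin⟩ := hmain
    have hmn : m = n := by omega
    have him : i < m := by omega
    have h1n : 1 < n + 1 := by omega
    set j₀ : Fin m → Fin (n + 1) := fun ν => if (ν : ℕ) = i then ⟨1, h1n⟩ else ⟨0, by omega⟩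
      with hj₀
    have hj₀v : ∀ ν : Fin m, (j₀ ν : ℕ) = if (ν : ℕ) = i then 1 else 0 := by
      intro ν; rw [hj₀]; by_cases hc : (ν : ℕ) = i <;> simp [hc]
    rw [Finset.sum_eq_single j₀]
    · -- value at j₀
      have hfin : ∀ ν : Fin m, ((ν : ℕ) = i) = (ν = ⟨i, him⟩) := by
        intro ν; simp [Fin.ext_iff]
      have hcond1 : (∑ ν : Fin m, ((ν : ℕ) + 1) * (j₀ ν : ℕ)) = n := by
        rw [Finset.sum_congr rfl fun ν _ => by rw [hj₀v ν]]
        have : ∀ ν : Fin m, (((ν : ℕ) + 1) * if (ν : ℕ) = i then 1 else 0)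
            = if ν = ⟨i, him⟩ then i + 1 else 0 := by
          intro ν; by_cases hc : (ν : ℕ) = i <;> simp [hc, Fin.ext_iff]
        rw [Finset.sum_congr rfl fun ν _ => this ν,
          Finset.sum_ite_eq' Finset.univ (⟨i, him⟩ : Fin m) (fun _ => i + 1)]
        simpa using hin
      have hcond2 : (∑ ν : Fin m, (j₀ ν : ℕ)) = k := by
        rw [Finset.sum_congr rfl fun ν _ => hj₀v ν]
        simp only [hfin]
        rw [Finset.sum_ite_eq' Finset.univ (⟨i, him⟩ : Fin m) (fun _ => 1)]
        simp [hk1]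
      have hcond3 : (∑ ν : Fin m, Finsupp.single (ν : ℕ) ((j₀ ν : ℕ)))
          = Finsupp.single i 1 := by
        ext x
        rw [aux_Dj_apply, Finsupp.single_apply]
        by_cases hx : x < m
        · rw [dif_pos hx, hj₀v]
          by_cases hxi : x = i
          · simp [hxi]
          · rw [if_neg (by simpa using hxi), if_neg (by omega)]
        · rw [dif_neg hx, if_neg (by omega)]
      rw [if_pos ⟨⟨hcond1, hcond2⟩, hcond3⟩]
      have hfact : (∏ ν : Fin m,
          ((j₀ ν : ℕ).factorial * ((ν : ℕ) + 1).factorial ^ (j₀ ν : ℕ))) = n.factorial := by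
        have : ∀ ν : Fin m, ((j₀ ν : ℕ).factorial * ((ν : ℕ) + 1).factorial ^ (j₀ ν : ℕ))
            = if ν = ⟨i, him⟩ then (i + 1).factorial else 1 := by
          intro ν
          rw [hj₀v ν]
          by_cases hc : (ν : ℕ) = i <;> simp [hc, Fin.ext_iff, Nat.factorial]
        rw [Finset.prod_congr rfl fun ν _ => this ν,
          Finset.prod_ite_eq' Finset.univ (⟨i, him⟩ : Fin m) (fun _ => (i + 1).factorial)]
        simp [hin]
      have hprodA : (∏ ν : Fin m, a (ν : ℕ) ^ (j₀ ν : ℕ)) = a i := by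
        have : ∀ ν : Fin m, a (ν : ℕ) ^ (j₀ ν : ℕ)
            = if ν = ⟨i, him⟩ then a i else 1 := by
          intro ν
          rw [hj₀v ν]
          by_cases hc : (ν : ℕ) = i
          · rw [if_pos hc, if_pos (Fin.ext hc), pow_one, hc]
          · rw [if_neg hc, if_neg (by simpa [Fin.ext_iff] using hc), pow_zero]
        rw [Finset.prod_congr rfl fun ν _ => this ν,
          Finset.prod_ite_eq' Finset.univ (⟨i, him⟩ : Fin m) (fun _ => a i)]
        simp
      rw [hfact, hprodA, Nat.div_self (Nat.factorial_pos n)]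
      simp
    · -- other j give zero
      intro j _ hjne
      rw [if_neg]
      intro hcond
      obtain ⟨_, _, hj⟩ := key j hcond
      apply hjne
      funext ν
      have := hj ν
      rw [← hj₀v ν] at this
      exact Fin.ext this
    · intro hmem; exact absurd (Finset.mem_univ j₀) hmem
  · rw [if_neg hmain]
    apply Finset.sum_eq_zero
    intro j _
    rw [if_neg]
    intro hcond
    obtain ⟨h1, h2, _⟩ := key j hcond
    exact hmain ⟨h1, h2⟩

lemma aux_bellPartial_low (g : ℕ → MvPolynomial ℕ ℤ)
    (hg : ∀ ν, MvPolynomial.constantCoeff (g ν) = 0) (N K : ℕ) :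
    ∀ d : ℕ →₀ ℕ, (d.sum fun _ e => e) < K →
      MvPolynomial.coeff d (MvPolynomial.aeval g (bellPartial N K)) = 0 := by
  intro d hd
  rw [bellPartial, map_sum, MvPolynomial.coeff_sum]
  apply Finset.sum_eq_zero
  intro j _
  rw [apply_ite (MvPolynomial.aeval g), map_zero,
    apply_ite (MvPolynomial.coeff d), MvPolynomial.coeff_zero]
  split_ifs with hP
  · rw [map_mul, MvPolynomial.aeval_C, map_prod]
    simp only [map_pow]
    rw [MvPolynomial.algebraMap_eq, MvPolynomial.coeff_C_mul]
    have hlt : (d.sum fun _ e => e) < ∑ ν : Fin (N - K + 1), (j ν : ℕ) := by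
      rw [hP.2]; exact hd
    have := aux_prod_low Finset.univ
      (fun ν : Fin (N - K + 1) =>
        MvPolynomial.aeval g ((MvPolynomial.X (ν : ℕ) : MvPolynomial ℕ ℤ)))
      (fun ν => (j ν : ℕ)) (fun ν _ => by simp [hg]) d hlt
    rw [this, mul_zero]
  · rfl

lemma aux_coeff_bellComplete_scaled (a : ℕ → ℤ) (N i : ℕ) :
    MvPolynomial.coeff (Finsupp.single i 1)
      (MvPolynomial.aeval (fun ν : ℕ => MvPolynomial.C (a ν) * MvPolynomial.X ν)
        (bellComplete N))
      = if i + 1 = N then a i else 0 := by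
  rw [bellComplete, map_sum, MvPolynomial.coeff_sum]
  rw [Finset.sum_congr rfl
    (fun k hk => aux_coeff_bellPartial_scaled a N k i (Finset.mem_Icc.mp hk).1)]
  by_cases h : i + 1 = N
  · rw [if_pos h]
    rw [Finset.sum_eq_single 1]
    · rw [if_pos ⟨rfl, h⟩]
    · intro k _ hk1
      rw [if_neg]
      rintro ⟨hk, _⟩; exact hk1 hk
    · intro hmem
      exact absurd (Finset.mem_Icc.mpr ⟨le_refl 1, by omega⟩) hmem
  · rw [if_neg h]
    apply Finset.sum_eq_zero
    intro k _
    rw [if_neg]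
    rintro ⟨_, hk⟩; exact h hk

lemma aux_neg_one_pow (N : ℕ) :
    ((-1 : MvPolynomial ℕ ℤ)) ^ N = MvPolynomial.C ((-1 : ℤ) ^ N) := by
  rw [map_pow, map_neg, map_one]

lemma aux_coeff_sigmaStar (N i : ℕ) :
    MvPolynomial.coeff (Finsupp.single i 1) (sigmaStar N)
      = if i + 1 = N then (-1) ^ (N + 1) * (i.factorial : ℤ) else 0 := by
  rw [sigmaStar, aux_neg_one_pow, MvPolynomial.coeff_C_mul,
    aux_coeff_bellComplete_scaled (fun ν : ℕ => -(ν.factorial : ℤ)) N i]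
  split_ifs with h
  · ring
  · rw [mul_zero]

lemma aux_constCoeff_sigmaStar (N : ℕ) (hN : 1 ≤ N) :
    MvPolynomial.coeff (0 : ℕ →₀ ℕ) (sigmaStar N) = 0 := by
  rw [sigmaStar, aux_neg_one_pow, MvPolynomial.coeff_C_mul, bellComplete, map_sum,
    MvPolynomial.coeff_sum]
  rw [Finset.sum_eq_zero, mul_zero]
  intro k hk
  apply aux_bellPartial_low
  · intro ν; simp
  · simp only [Finsupp.sum_zero_index]
    exact (Finset.mem_Icc.mp hk).1

lemma aux_coeff_PsiOf_low (f : ℕ → MvPolynomial ℕ ℤ)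
    (hf : ∀ m, MvPolynomial.constantCoeff (f m) = 0) (N : ℕ) (d : ℕ →₀ ℕ)
    (hd : (d.sum fun _ e => e) ≤ 1) :
    MvPolynomial.coeff d (PsiOf f N) = 0 := by
  rw [PsiOf, MvPolynomial.coeff_sum]
  apply Finset.sum_eq_zero
  intro ν hν
  rw [MvPolynomial.coeff_sum]
  apply Finset.sum_eq_zero
  intro k _
  rw [MvPolynomial.coeff_C_mul,
    aux_bellPartial_low (fun i => f (i + 1)) (fun i => hf (i + 1)) (N - k) ν d
      (by have := (Finset.mem_Icc.mp hν).1; omega), mul_zero]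

lemma psi_zero : psi 0 = 0 := by
  unfold psi
  rw [Nat.strongRecOn_eq]
  simp

lemma psi_eq (n : ℕ) (h : n ≠ 0) :
    psi n = (n : ℤ) • psi (n - 1) + sigmaStar n +
      PsiOf (fun m => if m < n then psi m else 0) n := by
  unfold psi
  rw [Nat.strongRecOn_eq, dif_neg h]
  rfl

lemma psi_constCoeff : ∀ n, MvPolynomial.coeff (0 : ℕ →₀ ℕ) (psi n) = 0 := by
  intro n
  induction n using Nat.strong_induction_on with
  | _ n ih =>
    rcases Nat.eq_zero_or_pos n with h0 | h0
    · rw [h0, psi_zero, MvPolynomial.coeff_zero]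
    · rw [psi_eq n (by omega), MvPolynomial.coeff_add, MvPolynomial.coeff_add,
        MvPolynomial.coeff_smul, ih (n - 1) (by omega),
        aux_constCoeff_sigmaStar n h0,
        aux_coeff_PsiOf_low _ ?_ n 0 (by simp)]
      · simp
      · intro m
        rw [MvPolynomial.constantCoeff_eq]
        split_ifs with hm
        · exact ih m hm
        · exact MvPolynomial.coeff_zero _

lemma psi_main : ∀ n i : ℕ,
    MvPolynomial.coeff (Finsupp.single i 1) (psi n)
      = if i < n then
          (-1) ^ i * (i.factorial : ℤ) * ((n.factorial / (i + 1).factorial : ℕ) : ℤ)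
        else 0 := by
  intro n
  induction n with
  | zero => intro i; rw [psi_zero, MvPolynomial.coeff_zero, if_neg (by omega)]
  | succ n ih =>
    intro i
    rw [psi_eq (n + 1) (by omega), MvPolynomial.coeff_add, MvPolynomial.coeff_add,
      MvPolynomial.coeff_smul, Nat.add_sub_cancel, ih i, aux_coeff_sigmaStar (n + 1) i,
      aux_coeff_PsiOf_low _ ?_ (n + 1) _ (by rw [Finsupp.sum_single_index]; simp), add_zero]
    · rcases lt_trichotomy i n with hi | hi | hi
      · rw [if_pos hi, if_neg (by omega), add_zero, if_pos (by omega)]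
        have hdvd : (i + 1).factorial ∣ n.factorial :=
          Nat.factorial_dvd_factorial (by omega)
        have hnat : (n + 1) * (n.factorial / (i + 1).factorial)
            = (n + 1).factorial / (i + 1).factorial := by
          rw [Nat.factorial_succ n, Nat.mul_div_assoc _ hdvd]
        have : ((n : ℤ) + 1) • ((-1) ^ i * (i.factorial : ℤ)
              * ((n.factorial / (i + 1).factorial : ℕ) : ℤ))
            = (-1) ^ i * (i.factorial : ℤ)
              * (((n + 1) * (n.factorial / (i + 1).factorial) : ℕ) : ℤ) := by
          push_cast
          rw [smul_eq_mul]
          ring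
        rw [show ((n + 1 : ℕ) : ℤ) • ((-1) ^ i * (i.factorial : ℤ)
              * ((n.factorial / (i + 1).factorial : ℕ) : ℤ))
            = ((n : ℤ) + 1) • ((-1) ^ i * (i.factorial : ℤ)
              * ((n.factorial / (i + 1).factorial : ℕ) : ℤ)) by push_cast; ring_nf,
          this, hnat]
      · rw [if_neg (by omega), if_pos (by omega), if_pos (by omega), smul_zero, zero_add]
        subst hi
        rw [Nat.div_self (Nat.factorial_pos (i + 1))]
        push_cast
        ring
      · rw [if_neg (by omega), if_neg (by omega), if_neg (by omega), smul_zero, zero_add]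
    · intro m
      rw [MvPolynomial.constantCoeff_eq]
      split_ifs with hm
      · exact psi_constCoeff m
      · exact MvPolynomial.coeff_zero _

theorem stmt16 (n : ℕ) (hn : 2 ≤ n) :
    MvPolynomial.coeff (Finsupp.single 0 1) (psi n) = (n.factorial : ℤ) ∧
    MvPolynomial.coeff (Finsupp.single (n - 1) 1) (psi n) =
      (-1) ^ (n - 1) * ((n - 1).factorial : ℤ) := by
  constructor
  · rw [psi_main n 0, if_pos (by omega)]
    simp [Nat.factorial]
  · rw [psi_main n (n - 1), if_pos (by omega)]
    have h1 : n - 1 + 1 = n := by omega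
    rw [h1, Nat.div_self (Nat.factorial_pos n)]
    push_cast
    ring
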